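/- (Deterministic core of Proposition 1) Let p be a statistics on a finite type set Ω with d_w ≥ 1 and r_w ≤ k_w for all w, and let c ∈ [0,1) be such that φ_p(z) > z for every z ∈ [0,c]. Define the recursion z(0) = 0, z(t+1) = φ_p(z(t)). Then there exists a finite time τ such that z(t) > c for all t ≥ τ; moreover, if c = inf{ z ∈ [0,1] : ψ_p(z) ≥ 1−ε } for some ε ∈ (0,1], then ψ_p(z(t)) ≥ 1−ε for all t ≥ τ. -/

import Mathlib

/-- `φ_{k,r}(z) = ∑_{u=r}^{k} (k choose u) z^u (1-z)^{k-u}`. -/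
def phiKR (k r : ℕ) (z : ℝ) : ℝ :=
  ∑ u ∈ Finset.Icc r k, (k.choose u : ℝ) * z ^ u * (1 - z) ^ (k - u)

/-- `ψ_p(z) = ∑_w p_w φ_{k_w, r_w}(z)`. -/
def psiP {Ω : Type*} [Fintype Ω] (k r : Ω → ℕ) (p : Ω → ℝ) (z : ℝ) : ℝ :=
  ∑ w, p w * phiKR (k w) (r w) z

/-- `φ_p(z) = ⟨p,d⟩⁻¹ ∑_w p_w d_w φ_{k_w, r_w}(z)`. -/
noncomputable def phiP {Ω : Type*} [Fintype Ω] (d k r : Ω → ℕ) (p : Ω → ℝ) (z : ℝ) : ℝ :=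
  (∑ w, p w * (d w : ℝ))⁻¹ * ∑ w, p w * (d w : ℝ) * phiKR (k w) (r w) z

/-!
On the compact interval `[0, c]` the continuous gap `φ_p(z) - z` has a positive minimum `δ`, so
as long as the recursion stays in `[0, c]` it grows by at least `δ` per step; hence it leaves
`[0, c]` after finitely many steps. Since `φ_p` is monotone on `[0, 1]` and `φ_p(c) > c`, it never
returns. Every iterate beyond the infimum `c` lies above some `z` with `ψ_p(z) ≥ 1 - ε`, and `ψ_p`
is monotone. Monotonicity of `φ_{k,r}` comes from its derivative, which telescopes to
`(k choose r) r z^(r-1) (1-z)^(k-r) ≥ 0`.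
-/

open Set Function

theorem exists_lt_iterate_of_lt_apply {f : ℝ → ℝ} {a c : ℝ} (hf : ContinuousOn f (Icc a c))
    (hlt : ∀ z ∈ Icc a c, z < f z) : ∃ t : ℕ, c < f^[t] a := by
  rcases lt_or_ge c a with hca | hac
  · exact ⟨0, hca⟩
  obtain ⟨z₀, hz₀, hmin⟩ :=
    isCompact_Icc.exists_isMinOn (nonempty_Icc.2 hac) (hf.sub continuousOn_id)
  have hδ : 0 < f z₀ - z₀ := sub_pos.2 (hlt z₀ hz₀)
  by_contra! hle
  have hgrowth : ∀ t : ℕ, a + t * (f z₀ - z₀) ≤ f^[t] a := by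
    intro t
    induction t with
    | zero => simp
    | succ t ih =>
      have hgap : f z₀ - z₀ ≤ f (f^[t] a) - f^[t] a :=
        hmin ⟨by nlinarith [t.cast_nonneg (α := ℝ)], hle t⟩
      rw [iterate_succ_apply']
      push_cast
      linarith
  obtain ⟨N, hN⟩ := exists_nat_gt ((c - a) / (f z₀ - z₀))
  rw [div_lt_iff₀ hδ] at hN
  linarith [hgrowth N, hle N]

theorem MonotoneOn.lt_iterate_of_le {α : Type*} [Preorder α] {f : α → α} {s : Set α}
    (hmono : MonotoneOn f s) (hmaps : MapsTo f s s) {c x : α} (hc : c ∈ s) (hfc : c < f c)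
    (hx : x ∈ s) {τ t : ℕ} (hτ : c < f^[τ] x) (ht : τ ≤ t) : c < f^[t] x := by
  induction t, ht using Nat.le_induction with
  | base => exact hτ
  | succ t _ ih =>
    rw [iterate_succ_apply']
    exact hfc.trans_le (hmono hc (hmaps.iterate t hx) ih.le)

theorem MonotoneOn.le_apply_of_csInf_lt {α β : Type*} [ConditionallyCompleteLinearOrder α]
    [Preorder β] {g : α → β} {s : Set α} (hg : MonotoneOn g s) {y : β} {x : α}
    (hne : {z | z ∈ s ∧ y ≤ g z}.Nonempty) (hx : x ∈ s)
    (hlt : sInf {z | z ∈ s ∧ y ≤ g z} < x) : y ≤ g x := by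
  obtain ⟨z, ⟨hzs, hyz⟩, hzx⟩ := exists_lt_of_csInf_lt hne hlt
  exact hyz.trans (hg hzs hx hzx.le)

theorem continuous_phiKR (k r : ℕ) : Continuous (phiKR k r) := by
  unfold phiKR
  fun_prop

-- The derivative is written as `b u - b (u + 1)` with `b u = (k choose u) u z^(u-1) (1-z)^(k-u)`,
-- so that summing over `u` telescopes.
theorem hasDerivAt_binomial_term (k u : ℕ) (z : ℝ) :
    HasDerivAt (fun z : ℝ => (k.choose u : ℝ) * z ^ u * (1 - z) ^ (k - u))
      ((k.choose u : ℝ) * u * z ^ (u - 1) * (1 - z) ^ (k - u) -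
        (k.choose (u + 1) : ℝ) * (u + 1 : ℕ) * z ^ (u + 1 - 1) * (1 - z) ^ (k - (u + 1))) z := by
  have hderiv : HasDerivAt (fun z : ℝ => (k.choose u : ℝ) * z ^ u * (1 - z) ^ (k - u))
      (k.choose u * (u * z ^ (u - 1)) * (1 - z) ^ (k - u) +
        k.choose u * z ^ u * ((k - u : ℕ) * (1 - z) ^ (k - u - 1) * -1)) z :=
    ((hasDerivAt_pow u z).const_mul _).mul (((hasDerivAt_id z).const_sub 1).pow (k - u))
  convert hderiv using 1
  have hchoose : (k.choose (u + 1) : ℝ) * (u + 1 : ℕ) = k.choose u * (k - u : ℕ) := by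
    exact_mod_cast Nat.choose_succ_right_eq k u
  rw [Nat.add_sub_cancel, Nat.sub_add_eq]
  linear_combination -z ^ u * (1 - z) ^ (k - u - 1) * hchoose

theorem hasDerivAt_phiKR {k r : ℕ} (hrk : r ≤ k) (z : ℝ) :
    HasDerivAt (phiKR k r) ((k.choose r : ℝ) * r * z ^ (r - 1) * (1 - z) ^ (k - r)) z := by
  set b : ℕ → ℝ := fun u => (k.choose u : ℝ) * u * z ^ (u - 1) * (1 - z) ^ (k - u)
  have hsum : ∑ u ∈ Finset.Icc r k, (b u - b (u + 1)) = b r := by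
    have htop : b (k + 1) = 0 := by simp [b, Nat.choose_succ_self]
    have htelescope := Finset.sum_Icc_sub hrk b
    rw [Finset.sum_sub_distrib] at htelescope ⊢
    linarith
  have hderiv : HasDerivAt (phiKR k r) (∑ u ∈ Finset.Icc r k, (b u - b (u + 1))) z :=
    HasDerivAt.fun_sum fun u _ => hasDerivAt_binomial_term k u z
  rwa [hsum] at hderiv

theorem monotoneOn_phiKR {k r : ℕ} (hrk : r ≤ k) : MonotoneOn (phiKR k r) (Icc 0 1) := by
  refine monotoneOn_of_deriv_nonneg (convex_Icc 0 1) (continuous_phiKR k r).continuousOn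
    (fun z _ => (hasDerivAt_phiKR hrk z).differentiableAt.differentiableWithinAt) ?_
  intro z hz
  rw [interior_Icc] at hz
  have h1z : 0 ≤ 1 - z := by linarith [hz.2]
  have hz0 : 0 ≤ z := hz.1.le
  rw [(hasDerivAt_phiKR hrk z).deriv]
  positivity

theorem phiKR_nonneg (k r : ℕ) {z : ℝ} (hz : z ∈ Icc (0 : ℝ) 1) : 0 ≤ phiKR k r z := by
  have h1z : 0 ≤ 1 - z := by linarith [hz.2]
  have hz0 : 0 ≤ z := hz.1
  unfold phiKR
  positivity

theorem phiKR_le_one (k r : ℕ) {z : ℝ} (hz : z ∈ Icc (0 : ℝ) 1) : phiKR k r z ≤ 1 := by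
  have h1z : 0 ≤ 1 - z := by linarith [hz.2]
  have hz0 : 0 ≤ z := hz.1
  calc phiKR k r z
      ≤ ∑ u ∈ Finset.range (k + 1), (k.choose u : ℝ) * z ^ u * (1 - z) ^ (k - u) := by
        refine Finset.sum_le_sum_of_subset_of_nonneg (fun u hu => ?_) (fun u _ _ => by positivity)
        simp only [Finset.mem_range, Finset.mem_Icc] at hu ⊢
        omega
    _ = (z + (1 - z)) ^ k := by
        rw [add_pow]
        exact Finset.sum_congr rfl fun u _ => by ring
    _ = 1 := by norm_num

theorem phiKR_one {k r : ℕ} (hrk : r ≤ k) : phiKR k r 1 = 1 := by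
  unfold phiKR
  rw [Finset.sum_eq_single_of_mem k (Finset.mem_Icc.2 ⟨hrk, le_rfl⟩)]
  · simp
  · intro u hu hne
    have : k - u ≠ 0 := by
      rw [Finset.mem_Icc] at hu
      omega
    simp [this]

section Mixture

variable {Ω : Type*} [Fintype Ω] (d k r : Ω → ℕ) (p : Ω → ℝ)

theorem continuous_phiP : Continuous (phiP d k r p) := by
  unfold phiP
  have := fun w => continuous_phiKR (k w) (r w)
  fun_prop

variable {k r p}

theorem monotoneOn_phiP (hrk : ∀ w, r w ≤ k w) (hp0 : ∀ w, 0 ≤ p w) :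
    MonotoneOn (phiP d k r p) (Icc 0 1) := by
  intro x hx y hy hxy
  have hD : 0 ≤ (∑ w, p w * (d w : ℝ))⁻¹ :=
    inv_nonneg.2 (Finset.sum_nonneg fun w _ => mul_nonneg (hp0 w) (d w).cast_nonneg)
  refine mul_le_mul_of_nonneg_left (Finset.sum_le_sum fun w _ => ?_) hD
  exact mul_le_mul_of_nonneg_left (monotoneOn_phiKR (hrk w) hx hy hxy)
    (mul_nonneg (hp0 w) (d w).cast_nonneg)

theorem mapsTo_phiP (hp0 : ∀ w, 0 ≤ p w) (hD : 0 < ∑ w, p w * (d w : ℝ)) :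
    MapsTo (phiP d k r p) (Icc 0 1) (Icc 0 1) := by
  intro z hz
  have hweight : ∀ w, 0 ≤ p w * (d w : ℝ) := fun w => mul_nonneg (hp0 w) (d w).cast_nonneg
  constructor
  · exact mul_nonneg (inv_nonneg.2 hD.le)
      (Finset.sum_nonneg fun w _ => mul_nonneg (hweight w) (phiKR_nonneg _ _ hz))
  · rw [phiP, inv_mul_le_iff₀ hD, mul_one]
    exact Finset.sum_le_sum fun w _ =>
      mul_le_of_le_one_right (hweight w) (phiKR_le_one _ _ hz)

theorem monotoneOn_psiP (hrk : ∀ w, r w ≤ k w) (hp0 : ∀ w, 0 ≤ p w) :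
    MonotoneOn (psiP k r p) (Icc 0 1) := fun _ hx _ hy hxy =>
  Finset.sum_le_sum fun w _ =>
    mul_le_mul_of_nonneg_left (monotoneOn_phiKR (hrk w) hx hy hxy) (hp0 w)

theorem psiP_one (hrk : ∀ w, r w ≤ k w) : psiP k r p 1 = ∑ w, p w := by
  simp only [psiP, phiKR_one (hrk _), mul_one]

end Mixture

theorem recursion_exceeds_threshold_in_finite_time_general
    {Ω : Type*} [Fintype Ω] (d k r : Ω → ℕ)
    (hd : ∀ w, 1 ≤ d w) (hrk : ∀ w, r w ≤ k w)
    (p : Ω → ℝ) (hp0 : ∀ w, 0 ≤ p w) (hpsum : ∑ w, p w = 1)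
    (c : ℝ) (hc0 : 0 ≤ c) (hc1 : c < 1)
    (hφ : ∀ z ∈ Set.Icc (0 : ℝ) c, z < phiP d k r p z) :
    ∃ τ : ℕ,
      (∀ t : ℕ, τ ≤ t → c < (phiP d k r p)^[t] 0) ∧
      (∀ ε : ℝ, 0 < ε → ε ≤ 1 →
        c = sInf {z : ℝ | z ∈ Set.Icc (0 : ℝ) 1 ∧ 1 - ε ≤ psiP k r p z} →
        ∀ t : ℕ, τ ≤ t → 1 - ε ≤ psiP k r p ((phiP d k r p)^[t] 0)) := by
  have hD : 0 < ∑ w, p w * (d w : ℝ) := by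
    calc (0 : ℝ) < ∑ w, p w := by rw [hpsum]; exact one_pos
      _ ≤ ∑ w, p w * (d w : ℝ) := Finset.sum_le_sum fun w _ =>
        le_mul_of_one_le_right (hp0 w) (by exact_mod_cast hd w)
  have hmaps := mapsTo_phiP d hp0 hD (k := k) (r := r)
  have hzero : (0 : ℝ) ∈ Icc 0 1 := ⟨le_rfl, zero_le_one⟩
  obtain ⟨τ, hτ⟩ := exists_lt_iterate_of_lt_apply (continuous_phiP d k r p).continuousOn hφ
  have habove : ∀ t, τ ≤ t → c < (phiP d k r p)^[t] 0 := fun t ht =>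
    (monotoneOn_phiP d hrk hp0).lt_iterate_of_le hmaps ⟨hc0, hc1.le⟩ (hφ c ⟨hc0, le_rfl⟩)
      hzero hτ ht
  refine ⟨τ, habove, fun ε hε _ hc t ht => ?_⟩
  have hone : {z : ℝ | z ∈ Icc 0 1 ∧ 1 - ε ≤ psiP k r p z}.Nonempty :=
    ⟨1, ⟨zero_le_one, le_rfl⟩, by rw [psiP_one hrk, hpsum]; linarith⟩
  exact (monotoneOn_psiP hrk hp0).le_apply_of_csInf_lt hone (hmaps.iterate t hzero)
    (hc ▸ habove t ht)

/-- (Deterministic core of Proposition 1) If `φ_p(z) > z` on `[0,c]` with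
`c ∈ [0,1)`, then the recursion `z(0) = 0`, `z(t+1) = φ_p(z(t))` exceeds `c`
after finitely many steps; moreover, if `c` is the infimum of
`{ z ∈ [0,1] : ψ_p(z) ≥ 1−ε }`, then `ψ_p(z(t)) ≥ 1−ε` from that time on. -/
theorem recursion_exceeds_threshold_in_finite_time
    {Ω : Type*} [Fintype Ω] [Nonempty Ω] (d k r : Ω → ℕ)
    (hd : ∀ w, 1 ≤ d w) (hrk : ∀ w, r w ≤ k w)
    (p : Ω → ℝ) (hp0 : ∀ w, 0 ≤ p w) (hp1 : ∀ w, p w ≤ 1) (hpsum : ∑ w, p w = 1)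
    (c : ℝ) (hc0 : 0 ≤ c) (hc1 : c < 1)
    (hφ : ∀ z ∈ Set.Icc (0 : ℝ) c, z < phiP d k r p z) :
    ∃ τ : ℕ,
      (∀ t : ℕ, τ ≤ t → c < (phiP d k r p)^[t] 0) ∧
      (∀ ε : ℝ, 0 < ε → ε ≤ 1 →
        c = sInf {z : ℝ | z ∈ Set.Icc (0 : ℝ) 1 ∧ 1 - ε ≤ psiP k r p z} →
        ∀ t : ℕ, τ ≤ t → 1 - ε ≤ psiP k r p ((phiP d k r p)^[t] 0)) :=
  recursion_exceeds_threshold_in_finite_time_general d k r hd hrk p hp0 hpsum c hc0 hc1 hφ
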